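/- arXiv:1404.3709 — 3 statements merged into one kernel-verified Lean document; each statement's English description precedes it below -/
import Mathlib

section
/- Let z₀ ∈ ℂ, ε > 0, and Ω = {z ∈ ℂ : |z − z₀| ≤ ε}. Suppose f : Ω → ℂ is analytic and there are positive constants a, b, d with |f(z₀)| ≤ a, |f′(z₀)| ≥ b, sup_{z∈Ω}|f″(z)| ≤ d, and suppose a + dε² < εb and dε < cb with c < 1. Then there is a unique z ∈ Ω with f(z) = 0. -/
/-!
The simplified Newton map `N z = z - f z / f'(z₀)` has derivative `(f'(z₀) - f'(z)) / f'(z₀)`,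
which the bound on `f''` makes at most `dε/b < c < 1` on `Ω`; so `N` is a contraction of `Ω`.
It moves `z₀` by at most `a/b`, and `a/b + (dε/b)ε < ε` keeps `Ω` invariant. Banach's fixed-point
theorem gives a unique fixed point of `N` in `Ω`, and the fixed points of `N` are the zeros of `f`.
-/

open Metric Set Function NNReal

theorem LipschitzOnWith.mapsTo_closedBall {α : Type*} [PseudoMetricSpace α] {f : α → α}
    {x : α} {r : ℝ} {K : ℝ≥0} (hf : LipschitzOnWith K f (closedBall x r))
    (h : K * r + dist (f x) x ≤ r) : MapsTo f (closedBall x r) (closedBall x r) := by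
  intro y hy
  have hx : x ∈ closedBall x r := mem_closedBall_self (dist_nonneg.trans hy)
  calc dist (f y) x ≤ dist (f y) (f x) + dist (f x) x := dist_triangle _ _ _
    _ ≤ K * dist y x + dist (f x) x := by gcongr; exact hf.dist_le_mul y hy x hx
    _ ≤ K * r + dist (f x) x := by gcongr; exact hy
    _ ≤ r := h

theorem LipschitzOnWith.existsUnique_isFixedPt {α : Type*} [MetricSpace α] {f : α → α}
    {s : Set α} {K : ℝ≥0} (hf : LipschitzOnWith K f s) (hK : K < 1) (hsc : IsComplete s)
    (hs : s.Nonempty) (hsf : MapsTo f s s) : ∃! x, x ∈ s ∧ IsFixedPt f x := by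
  have hcontr : ContractingWith K (hsf.restrict f s s) := ⟨hK, hf.mapsToRestrict hsf⟩
  obtain ⟨x₀, hx₀⟩ := hs
  obtain ⟨x, hx, hfix, -⟩ :=
    ContractingWith.exists_fixedPoint' hsc hsf hcontr hx₀ (edist_ne_top _ _)
  refine ⟨x, ⟨hx, hfix⟩, fun y ⟨hy, hfiy⟩ => ?_⟩
  have : (⟨y, hy⟩ : s) = ⟨x, hx⟩ :=
    hcontr.fixedPoint_unique' (Subtype.ext hfiy) (Subtype.ext hfix)
  exact congrArg Subtype.val this

section SimplifiedNewton

variable {𝕜 : Type*} [RCLike 𝕜] {f : 𝕜 → 𝕜} {z₀ z : 𝕜}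

theorem Convex.norm_deriv_sub_le_of_norm_iteratedDeriv_two_le {s : Set 𝕜} {d : ℝ} {x y : 𝕜}
    (hs : Convex ℝ s) (hf : ∀ x ∈ s, DifferentiableAt 𝕜 (deriv f) x)
    (hd : ∀ x ∈ s, ‖iteratedDeriv 2 f x‖ ≤ d) (hx : x ∈ s) (hy : y ∈ s) :
    ‖deriv f y - deriv f x‖ ≤ d * ‖y - x‖ :=
  hs.norm_image_sub_le_of_norm_deriv_le hf
    (fun z hz => by simpa only [iteratedDeriv_succ, iteratedDeriv_zero] using hd z hz) hx hy

noncomputable def simplifiedNewtonMap (f : 𝕜 → 𝕜) (z₀ : 𝕜) (z : 𝕜) : 𝕜 :=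
  z - f z / deriv f z₀

theorem isFixedPt_simplifiedNewtonMap_iff (h₀ : deriv f z₀ ≠ 0) :
    IsFixedPt (simplifiedNewtonMap f z₀) z ↔ f z = 0 := by
  simp [IsFixedPt, simplifiedNewtonMap, h₀]

theorem dist_simplifiedNewtonMap_self :
    dist (simplifiedNewtonMap f z₀ z) z = ‖f z‖ / ‖deriv f z₀‖ := by
  simp [simplifiedNewtonMap]

theorem hasDerivAt_simplifiedNewtonMap (h₀ : deriv f z₀ ≠ 0) (hf : DifferentiableAt 𝕜 f z) :
    HasDerivAt (simplifiedNewtonMap f z₀) ((deriv f z₀ - deriv f z) / deriv f z₀) z :=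
  ((hasDerivAt_id z).sub (hf.hasDerivAt.div_const (deriv f z₀))).congr_deriv <| by
    rw [sub_div (deriv f z₀), div_self h₀]

theorem lipschitzOnWith_simplifiedNewtonMap {s : Set 𝕜} {L : ℝ≥0} (hs : Convex ℝ s)
    (h₀ : deriv f z₀ ≠ 0) (hf : ∀ x ∈ s, DifferentiableAt 𝕜 f x)
    (hL : ∀ x ∈ s, ‖deriv f x - deriv f z₀‖ ≤ L * ‖deriv f z₀‖) :
    LipschitzOnWith L (simplifiedNewtonMap f z₀) s := by
  refine hs.lipschitzOnWith_of_nnnorm_deriv_le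
    (fun x hx => (hasDerivAt_simplifiedNewtonMap h₀ (hf x hx)).differentiableAt)
    (fun x hx => ?_)
  rw [← NNReal.coe_le_coe, coe_nnnorm, (hasDerivAt_simplifiedNewtonMap h₀ (hf x hx)).deriv,
    norm_div, norm_sub_rev, div_le_iff₀ (norm_pos_iff.mpr h₀)]
  exact hL x hx

end SimplifiedNewton

theorem newton_unique_zero_general (z₀ : ℂ) (ε a b d c : ℝ)
    (hε : 0 < ε) (hb : 0 < b) (hd : 0 < d)
    (f : ℂ → ℂ) (hf : AnalyticOnNhd ℂ f (Metric.closedBall z₀ ε))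
    (hfa : ‖f z₀‖ ≤ a) (hfb : b ≤ ‖deriv f z₀‖)
    (hfd : ∀ z ∈ Metric.closedBall z₀ ε, ‖iteratedDeriv 2 f z‖ ≤ d)
    (h1 : a + d * ε ^ 2 < ε * b) (h2 : d * ε < c * b) (hc : c < 1) :
    ∃! z, z ∈ Metric.closedBall z₀ ε ∧ f z = 0 := by
  have hz₀ : z₀ ∈ closedBall z₀ ε := mem_closedBall_self hε.le
  have h₀ : deriv f z₀ ≠ 0 := norm_pos_iff.mp (hb.trans_le hfb)
  have hderiv : ∀ z ∈ closedBall z₀ ε, ‖deriv f z - deriv f z₀‖ ≤ d * ε := fun z hz =>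
    calc ‖deriv f z - deriv f z₀‖ ≤ d * ‖z - z₀‖ :=
          (convex_closedBall z₀ ε).norm_deriv_sub_le_of_norm_iteratedDeriv_two_le
            (fun x hx => (hf.deriv x hx).differentiableAt) hfd hz₀ hz
      _ ≤ d * ε := by gcongr; exact mem_closedBall_iff_norm.mp hz
  set K := Real.toNNReal (d * ε / b)
  have hK : (K : ℝ) = d * ε / b := Real.coe_toNNReal _ (by positivity)
  have hlip : LipschitzOnWith K (simplifiedNewtonMap f z₀) (closedBall z₀ ε) :=
    lipschitzOnWith_simplifiedNewtonMap (convex_closedBall z₀ ε) h₀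
      (fun x hx => (hf x hx).differentiableAt) fun x hx => by
        calc ‖deriv f x - deriv f z₀‖ ≤ d * ε := hderiv x hx
          _ = K * b := by rw [hK]; field_simp
          _ ≤ K * ‖deriv f z₀‖ := by gcongr
  have hmaps := hlip.mapsTo_closedBall <| by
    have hfz₀ : ‖f z₀‖ / ‖deriv f z₀‖ ≤ a / b := div_le_div₀ ((norm_nonneg _).trans hfa) hfa hb hfb
    rw [dist_simplifiedNewtonMap_self, hK]
    calc d * ε / b * ε + ‖f z₀‖ / ‖deriv f z₀‖ ≤ (a + d * ε ^ 2) / b := by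
          rw [add_div]; linarith [show d * ε / b * ε = d * ε ^ 2 / b by ring]
      _ ≤ ε := by rw [div_le_iff₀ hb]; linarith
  have hK1 : K < 1 := by
    rw [← NNReal.coe_lt_one, hK, div_lt_one hb]
    nlinarith
  simpa only [isFixedPt_simplifiedNewtonMap_iff h₀] using
    hlip.existsUnique_isFixedPt hK1 isClosed_closedBall.isComplete ⟨z₀, hz₀⟩ hmaps

/-- Quantitative Newton/contraction lemma: if `f` is analytic on the closed disk
`Ω = closedBall z₀ ε`, `|f z₀| ≤ a`, `|f' z₀| ≥ b`, `|f''| ≤ d` on `Ω`, and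
`a + d ε² < ε b`, `d ε < c b` with `c < 1`, then `f` has a unique zero in `Ω`. -/
theorem newton_unique_zero (z₀ : ℂ) (ε a b d c : ℝ)
    (hε : 0 < ε) (ha : 0 < a) (hb : 0 < b) (hd : 0 < d)
    (f : ℂ → ℂ) (hf : AnalyticOnNhd ℂ f (Metric.closedBall z₀ ε))
    (hfa : ‖f z₀‖ ≤ a) (hfb : b ≤ ‖deriv f z₀‖)
    (hfd : ∀ z ∈ Metric.closedBall z₀ ε, ‖iteratedDeriv 2 f z‖ ≤ d)
    (h1 : a + d * ε ^ 2 < ε * b) (h2 : d * ε < c * b) (hc : c < 1) :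
    ∃! z, z ∈ Metric.closedBall z₀ ε ∧ f z = 0 :=
  newton_unique_zero_general z₀ ε a b d c hε hb hd f hf hfa hfb hfd h1 h2 hc
end

section
/- Let C > 0, a > 0, and let (x_n)_{n≥1} be a sequence of positive reals with x₁ = a and x_{n+1} ≤ x_n + C·x_n² for all n. If N is a positive integer with N·C·a·e ≤ 1/2 (where e is Euler's number), then x_n ≤ e·a for all 1 ≤ n ≤ N. -/
/-!
While `x_n ≤ M`, the recursion gives `x_{n+1} ≤ x_n (1 + C M)`, so `x_n ≤ a (1 + C M)^(n-1)`.
With `M = e a`, the condition `N C a e ≤ 1/2` makes `(1 + C e a)^(n-1) ≤ exp ((n-1) C e a) ≤ e`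
for `n ≤ N`, so the a priori cap `M` is never exceeded and the induction closes.
-/

open Real

theorem one_add_pow_le_exp_one {b : ℝ} (hb : 0 ≤ b) {k : ℕ} (hkb : k * b ≤ 1) :
    (1 + b) ^ k ≤ exp 1 :=
  calc (1 + b) ^ k ≤ exp b ^ k :=
        pow_le_pow_left₀ (by positivity) (by linarith [add_one_le_exp b]) k
    _ = exp (k * b) := (exp_nat_mul b k).symm
    _ ≤ exp 1 := exp_le_exp.2 hkb

theorem le_mul_one_add_pow_of_le_add_mul_sq {x : ℕ → ℝ} {C a M : ℝ} {K : ℕ} (hC : 0 ≤ C)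
    (hpos : ∀ k, 0 ≤ x k) (hrec : ∀ k, x (k + 1) ≤ x k + C * x k ^ 2) (hx0 : x 0 ≤ a)
    (hcap : ∀ k < K, a * (1 + C * M) ^ k ≤ M) :
    ∀ k ≤ K, x k ≤ a * (1 + C * M) ^ k := by
  intro k
  induction k with
  | zero => simpa using hx0
  | succ k ih =>
    intro hk
    have hxk : x k ≤ a * (1 + C * M) ^ k := ih (by omega)
    have hxM : x k ≤ M := hxk.trans (hcap k (by omega))
    calc x (k + 1) ≤ x k * (1 + C * x k) := by linarith [hrec k]
      _ ≤ x k * (1 + C * M) := by gcongr; exact hpos k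
      _ ≤ a * (1 + C * M) ^ k * (1 + C * M) := by
          gcongr
          nlinarith [hpos k, mul_nonneg hC (hpos k)]
      _ = a * (1 + C * M) ^ (k + 1) := by ring

theorem quadratic_recursion_stability_general (C a : ℝ) (hC : 0 < C) (ha : 0 < a)
    (x : ℕ → ℝ) (hpos : ∀ n, 1 ≤ n → 0 < x n) (hx1 : x 1 = a)
    (hrec : ∀ n, 1 ≤ n → x (n + 1) ≤ x n + C * (x n) ^ 2)
    (N : ℕ) (hNCa : (N : ℝ) * C * a * Real.exp 1 ≤ 1 / 2) :
    ∀ n, 1 ≤ n → n ≤ N → x n ≤ Real.exp 1 * a := by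
  intro n hn1 hnN
  obtain ⟨k, rfl⟩ : ∃ k, n = k + 1 := ⟨n - 1, by omega⟩
  have hb : 0 ≤ C * (exp 1 * a) := by positivity
  have hcap : ∀ j ≤ N, a * (1 + C * (exp 1 * a)) ^ j ≤ exp 1 * a := by
    intro j hj
    have hjN : (j : ℝ) ≤ N := by exact_mod_cast hj
    have hjb : j * (C * (exp 1 * a)) ≤ 1 := by nlinarith
    exact (mul_le_mul_of_nonneg_left (one_add_pow_le_exp_one hb hjb) ha.le).trans_eq (mul_comm _ _)
  have hgrowth := le_mul_one_add_pow_of_le_add_mul_sq (x := fun j => x (j + 1)) (K := N)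
    hC.le (fun j => (hpos (j + 1) (by omega)).le) (fun j => hrec (j + 1) (by omega)) hx1.le
    (fun j hj => hcap j hj.le) k (by omega)
  exact hgrowth.trans (hcap k (by omega))

/-- Stability of quadratically perturbed recursions: if `x₁ = a`,
`x_{n+1} ≤ x_n + C x_n²`, and `N C a e ≤ 1/2`, then `x_n ≤ e a` for `1 ≤ n ≤ N`. -/
theorem quadratic_recursion_stability (C a : ℝ) (hC : 0 < C) (ha : 0 < a)
    (x : ℕ → ℝ) (hpos : ∀ n, 1 ≤ n → 0 < x n) (hx1 : x 1 = a)
    (hrec : ∀ n, 1 ≤ n → x (n + 1) ≤ x n + C * (x n) ^ 2)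
    (N : ℕ) (hN : 1 ≤ N) (hNCa : (N : ℝ) * C * a * Real.exp 1 ≤ 1 / 2) :
    ∀ n, 1 ≤ n → n ≤ N → x n ≤ Real.exp 1 * a :=
  quadratic_recursion_stability_general C a hC ha x hpos hx1 hrec N hNCa
end

section
/- Let γ : (−δ, δ) → ℝ² be a smooth unit-speed plane curve with unit normal ν(s), satisfying γ′·ν = 0, |γ′| = |ν| = 1, γ″(s) = k(s)ν(s), and ν′(s) = −k(s)γ′(s), where k is the curvature. Then (γ(s) − γ(0)) · (ν(0) + ν(s)) = −k′(0)·s³/6 + O(s⁴) as s → 0. -/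
open RealInnerProductSpace Asymptotics

lemma isBigO_pow_succ_of_hasDerivAt {g g' : ℝ → ℝ} {n : ℕ}
    (hd : ∀ᶠ s in nhds (0:ℝ), HasDerivAt g (g' s) s)
    (h0 : g 0 = 0) (hO : g' =O[nhds 0] fun s => s ^ n) :
    g =O[nhds 0] fun s => s ^ (n+1) := by
  obtain ⟨C, hC⟩ := hO.bound
  have hC' : ∀ᶠ s in nhds (0:ℝ), ‖g' s‖ ≤ |C| * |s| ^ n := by
    filter_upwards [hC] with s hs
    calc ‖g' s‖ ≤ C * ‖s ^ n‖ := hs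
      _ ≤ |C| * |s| ^ n := by
          rw [norm_pow, Real.norm_eq_abs]
          exact mul_le_mul_of_nonneg_right (le_abs_self C) (by positivity)
  obtain ⟨ε, hε, hball⟩ := Metric.eventually_nhds_iff.1 (hd.and hC')
  rw [isBigO_iff]
  refine ⟨|C|, Metric.eventually_nhds_iff.2 ⟨ε, hε, fun {s} hs => ?_⟩⟩
  have habs : |s| < ε := by simpa [Real.dist_eq] using hs
  have key : ∀ t ∈ Set.uIcc (0:ℝ) s, |t| ≤ |s| := by
    intro t ht
    rw [Set.uIcc_eq_union, Set.mem_union] at ht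
    rcases ht with ht | ht <;> rw [Set.mem_Icc] at ht <;>
      exact abs_le.2 ⟨by cases abs_cases s <;> linarith, by cases abs_cases s <;> linarith⟩
  have hmem : ∀ t ∈ Set.uIcc (0:ℝ) s, dist t 0 < ε := fun t ht => by
    simpa [Real.dist_eq] using lt_of_le_of_lt (key t ht) habs
  have hderiv : ∀ t ∈ Set.uIcc (0:ℝ) s, HasDerivWithinAt g (g' t) (Set.uIcc 0 s) t :=
    fun t ht => ((hball (hmem t ht)).1).hasDerivWithinAt
  have hbound : ∀ t ∈ Set.uIcc (0:ℝ) s, ‖g' t‖ ≤ |C| * |s| ^ n := fun t ht => by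
    calc ‖g' t‖ ≤ |C| * |t| ^ n := (hball (hmem t ht)).2
      _ ≤ |C| * |s| ^ n :=
          mul_le_mul_of_nonneg_left (pow_le_pow_left₀ (abs_nonneg t) (key t ht) n)
            (abs_nonneg C)
  have hmvt := (convex_uIcc (0:ℝ) s).norm_image_sub_le_of_norm_hasDerivWithin_le hderiv hbound
    Set.left_mem_uIcc Set.right_mem_uIcc
  rw [h0, sub_zero, sub_zero, Real.norm_eq_abs] at hmvt
  calc ‖g s‖ ≤ |C| * |s| ^ n * |s| := hmvt
    _ = |C| * ‖s ^ (n+1)‖ := by rw [norm_pow, Real.norm_eq_abs, pow_succ]; ring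

lemma hasDerivAt_of_contDiffOn_aux {E : Type*} [NormedAddCommGroup E] [NormedSpace ℝ E]
    {f : ℝ → E} {U : Set ℝ} (hU : IsOpen U) (hf : ContDiffOn ℝ (⊤ : ℕ∞) f U) {s : ℝ} (hs : s ∈ U) :
    HasDerivAt f (deriv f s) s :=
  (((hf.differentiableOn (by simp)) s hs).differentiableAt (hU.mem_nhds hs)).hasDerivAt

/-- Taylor expansion for the change of the normal component along a smooth unit-speed
plane curve: `(γ(s) - γ(0)) ⬝ (ν(0) + ν(s)) = -k'(0) s³/6 + O(s⁴)` as `s → 0`. -/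
theorem normal_component_taylor (δ : ℝ) (hδ : 0 < δ)
    (γ ν : ℝ → EuclideanSpace ℝ (Fin 2)) (k : ℝ → ℝ)
    (hγ : ContDiffOn ℝ (⊤ : ℕ∞) γ (Set.Ioo (-δ) δ))
    (hν : ContDiffOn ℝ (⊤ : ℕ∞) ν (Set.Ioo (-δ) δ))
    (hk : ContDiffOn ℝ (⊤ : ℕ∞) k (Set.Ioo (-δ) δ))
    (horth : ∀ s ∈ Set.Ioo (-δ) δ, ⟪deriv γ s, ν s⟫ = 0)
    (hunitγ : ∀ s ∈ Set.Ioo (-δ) δ, ‖deriv γ s‖ = 1)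
    (hunitν : ∀ s ∈ Set.Ioo (-δ) δ, ‖ν s‖ = 1)
    (hcurv : ∀ s ∈ Set.Ioo (-δ) δ, deriv (deriv γ) s = k s • ν s)
    (hnormal : ∀ s ∈ Set.Ioo (-δ) δ, deriv ν s = -(k s) • deriv γ s) :
    (fun s : ℝ => ⟪γ s - γ 0, ν 0 + ν s⟫ + deriv k 0 * s ^ 3 / 6)
      =O[nhds 0] (fun s : ℝ => s ^ 4) := by
  set U := Set.Ioo (-δ) δ with hUdef
  have hU : IsOpen U := isOpen_Ioo
  have h0 : (0:ℝ) ∈ U := by constructor <;> simp [hδ]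
  -- basic derivative facts
  have Hγ : ∀ s ∈ U, HasDerivAt γ (deriv γ s) s :=
    fun s hs => hasDerivAt_of_contDiffOn_aux hU hγ hs
  have hγ' : ContDiffOn ℝ (⊤ : ℕ∞) (deriv γ) U := hγ.deriv_of_isOpen hU (by simp)
  have hk' : ContDiffOn ℝ (⊤ : ℕ∞) (deriv k) U := hk.deriv_of_isOpen hU (by simp)
  have Hν : ∀ s ∈ U, HasDerivAt ν (-(k s) • deriv γ s) s := fun s hs => by
    rw [← hnormal s hs]; exact hasDerivAt_of_contDiffOn_aux hU hν hs
  have Hγ'' : ∀ s ∈ U, HasDerivAt (deriv γ) (k s • ν s) s := fun s hs => by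
    rw [← hcurv s hs]; exact hasDerivAt_of_contDiffOn_aux hU hγ' hs
  have Hk : ∀ s ∈ U, HasDerivAt k (deriv k s) s :=
    fun s hs => hasDerivAt_of_contDiffOn_aux hU hk hs
  -- inner product values
  have hγγ : ∀ s ∈ U, ⟪deriv γ s, deriv γ s⟫ = 1 := fun s hs => by
    rw [real_inner_self_eq_norm_sq, hunitγ s hs]; norm_num
  have hνν0 : ⟪ν 0, ν 0⟫ = (1:ℝ) := by
    rw [real_inner_self_eq_norm_sq, hunitν 0 h0]; norm_num
  -- derivatives of the scalar building blocks
  have HA : ∀ s ∈ U, HasDerivAt (fun t => ⟪ν t, ν 0⟫) (-(k s * ⟪deriv γ s, ν 0⟫)) s := by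
    intro s hs
    have h := HasDerivAt.inner ℝ (Hν s hs) (hasDerivAt_const s (ν 0))
    refine h.congr_deriv ?_
    rw [inner_zero_right, real_inner_smul_left]
    ring
  have HB : ∀ s ∈ U, HasDerivAt (fun t => ⟪γ t - γ 0, deriv γ t⟫)
      (1 + k s * ⟪γ s - γ 0, ν s⟫) s := by
    intro s hs
    have h := HasDerivAt.inner ℝ ((Hγ s hs).sub_const (γ 0)) (Hγ'' s hs)
    refine h.congr_deriv ?_
    rw [real_inner_smul_right, hγγ s hs]
    ring
  have HC : ∀ s ∈ U, HasDerivAt (fun t => ⟪γ t - γ 0, ν t⟫)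
      (-(k s * ⟪γ s - γ 0, deriv γ s⟫)) s := by
    intro s hs
    have h := HasDerivAt.inner ℝ ((Hγ s hs).sub_const (γ 0)) (Hν s hs)
    refine h.congr_deriv ?_
    rw [real_inner_smul_right, horth s hs]
    ring
  -- first derivative of f
  have Hf : ∀ s ∈ U, HasDerivAt (fun t => ⟪γ t - γ 0, ν 0 + ν t⟫)
      (⟪deriv γ s, ν 0⟫ - k s * ⟪γ s - γ 0, deriv γ s⟫) s := by
    intro s hs
    have h := HasDerivAt.inner ℝ ((Hγ s hs).sub_const (γ 0))
      ((hasDerivAt_const s (ν 0)).add (Hν s hs))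
    refine h.congr_deriv ?_
    rw [inner_add_right, Pi.add_apply, inner_add_right, real_inner_smul_right, horth s hs]
    ring_nf
    rw [inner_zero_right]
    ring
  -- second derivative of f
  have Hf1 : ∀ s ∈ U, HasDerivAt
      (fun t => ⟪deriv γ t, ν 0⟫ - k t * ⟪γ t - γ 0, deriv γ t⟫)
      (k s * ⟪ν s, ν 0⟫ - deriv k s * ⟪γ s - γ 0, deriv γ s⟫
        - k s * (1 + k s * ⟪γ s - γ 0, ν s⟫)) s := by
    intro s hs
    have h1 := HasDerivAt.inner ℝ (Hγ'' s hs) (hasDerivAt_const s (ν 0))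
    have h2 := (Hk s hs).mul (HB s hs)
    have h := h1.sub h2
    refine h.congr_deriv ?_
    rw [inner_zero_right, real_inner_smul_left]
    ring
  -- third derivative of f at 0
  have Hf2 : HasDerivAt
      (fun s => k s * ⟪ν s, ν 0⟫ - deriv k s * ⟪γ s - γ 0, deriv γ s⟫
        - k s * (1 + k s * ⟪γ s - γ 0, ν s⟫)) (-(deriv k 0)) 0 := by
    have t1 := (Hk 0 h0).mul (HA 0 h0)
    have t2 := (hasDerivAt_of_contDiffOn_aux hU hk' h0).mul (HB 0 h0)
    have t3 := (Hk 0 h0).mul ((hasDerivAt_const 0 (1:ℝ)).add ((Hk 0 h0).mul (HC 0 h0)))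
    have h := (t1.sub t2).sub t3
    refine h.congr_deriv ?_
    simp only [Pi.add_apply, Pi.mul_apply, sub_self, inner_zero_left, hνν0, horth 0 h0]
    ring
  -- smoothness of the second derivative function f2
  have hA : ContDiffOn ℝ (⊤ : ℕ∞) (fun s => ⟪ν s, ν 0⟫) U := hν.inner ℝ contDiffOn_const
  have hBs : ContDiffOn ℝ (⊤ : ℕ∞) (fun s => ⟪γ s - γ 0, deriv γ s⟫) U :=
    (hγ.sub contDiffOn_const).inner ℝ hγ'
  have hCs : ContDiffOn ℝ (⊤ : ℕ∞) (fun s => ⟪γ s - γ 0, ν s⟫) U :=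
    (hγ.sub contDiffOn_const).inner ℝ hν
  have hf2smooth : ContDiffOn ℝ (⊤ : ℕ∞)
      (fun s => k s * ⟪ν s, ν 0⟫ - deriv k s * ⟪γ s - γ 0, deriv γ s⟫
        - k s * (1 + k s * ⟪γ s - γ 0, ν s⟫)) U :=
    ((hk.mul hA).sub (hk'.mul hBs)).sub (hk.mul (contDiffOn_const.add (hk.mul hCs)))
  set f2 : ℝ → ℝ := fun s => k s * ⟪ν s, ν 0⟫ - deriv k s * ⟪γ s - γ 0, deriv γ s⟫
        - k s * (1 + k s * ⟪γ s - γ 0, ν s⟫) with hf2def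
  have hf2' : ContDiffOn ℝ (⊤ : ℕ∞) (deriv f2) U := hf2smooth.deriv_of_isOpen hU (by simp)
  have hd2 : deriv f2 0 = -(deriv k 0) := Hf2.deriv
  set c := deriv k 0 with hcdef
  -- chain of big-O estimates
  have O1 : (fun s => deriv f2 s + c) =O[nhds (0:ℝ)] fun s => s ^ 1 := by
    have hdiffat : DifferentiableAt ℝ (deriv f2) 0 :=
      ((hf2'.differentiableOn (by simp)) 0 h0).differentiableAt (hU.mem_nhds h0)
    have h := hdiffat.isBigO_sub
    have e1 : (fun s : ℝ => deriv f2 s - deriv f2 0) = fun s => deriv f2 s + c := by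
      funext s; rw [hd2]; ring
    have e2 : (fun s : ℝ => s - 0) = fun s : ℝ => s ^ 1 := by funext s; ring
    rwa [e1, e2] at h
  have O2 : (fun s => f2 s + c * s) =O[nhds (0:ℝ)] fun s => s ^ 2 := by
    refine isBigO_pow_succ_of_hasDerivAt ?_ ?_ O1
    · filter_upwards [hU.mem_nhds h0] with s hs
      have hcs : HasDerivAt (fun t : ℝ => c * t) c s := by
        simpa using (hasDerivAt_id s).const_mul c
      exact (hasDerivAt_of_contDiffOn_aux hU hf2smooth hs).add hcs
    · simp only [hf2def, sub_self, inner_zero_left, hνν0]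
      ring
  have O3 : (fun s => (⟪deriv γ s, ν 0⟫ - k s * ⟪γ s - γ 0, deriv γ s⟫) + c * s ^ 2 / 2)
      =O[nhds (0:ℝ)] fun s => s ^ 3 := by
    refine isBigO_pow_succ_of_hasDerivAt ?_ ?_ O2
    · filter_upwards [hU.mem_nhds h0] with s hs
      have hcs : HasDerivAt (fun t : ℝ => c * t ^ 2 / 2) (c * s) s := by
        have := ((hasDerivAt_pow 2 s).const_mul c).div_const 2
        refine this.congr_deriv ?_
        ring
      exact (Hf1 s hs).add hcs
    · simp [horth 0 h0]
  have O4 : (fun s => ⟪γ s - γ 0, ν 0 + ν s⟫ + c * s ^ 3 / 6)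
      =O[nhds (0:ℝ)] fun s => s ^ 4 := by
    have := isBigO_pow_succ_of_hasDerivAt (g := fun s => ⟪γ s - γ 0, ν 0 + ν s⟫ + c * s ^ 3 / 6)
      (g' := fun s => (⟪deriv γ s, ν 0⟫ - k s * ⟪γ s - γ 0, deriv γ s⟫) + c * s ^ 2 / 2)
      ?_ ?_ O3
    · exact this
    · filter_upwards [hU.mem_nhds h0] with s hs
      have hcs : HasDerivAt (fun t : ℝ => c * t ^ 3 / 6) (c * s ^ 2 / 2) s := by
        have := ((hasDerivAt_pow 3 s).const_mul c).div_const 6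
        refine this.congr_deriv ?_
        ring
      exact (Hf s hs).add hcs
    · simp
  exact O4
end
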